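/- arXiv:1805.08920 — 2 statements merged into one kernel-verified Lean document; each statement's English description precedes it below -/
import Mathlib

section
/- Let (a_t) be a nonnegative real sequence satisfying a_{t+1} ≤ (1 − κ t^{-d}) a_t + C t^{-pd} for all t ≥ 1, with constants 0 < κ < 1, C ≥ 0, p ≥ 2, and d ∈ (1/2, 1). Then there exists a constant K (depending on a₁, C, κ, p, d) such that a_t ≤ K · t^{-(p-1)d} for all t ≥ 1. -/
/-!
Write `e = (q - 1) d`. By Bernoulli, `(t + 1)^{-e} ≥ t^{-e} (1 - e/t)`, and since `d < 1` the
relative loss `e/t` is at most `κ t^{-d} / 2` for large `t`: half the contraction that the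
recursion provides. For `K ≥ 2C/κ` the other half absorbs the forcing term
`C t^{-qd} = C t^{-d} t^{-e}`, so `a_t ≤ K t^{-e}` propagates from `t` to `t + 1` beyond some
threshold; the finitely many earlier terms are absorbed by enlarging `K`.
-/

open Real Filter

theorem one_add_mul_self_le_rpow_one_add_of_nonpos {s p : ℝ} (hs : -1 < s) (hp : p ≤ 0) :
    1 + p * s ≤ (1 + s) ^ p := by
  have hpos : 0 < 1 + s := by linarith
  have hlog : log (1 + s) ≤ s := by linarith [log_le_sub_one_of_pos hpos]
  rw [rpow_def_of_pos hpos, mul_comm (log (1 + s))]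
  linarith [mul_le_mul_of_nonpos_left hlog hp, add_one_le_exp (p * log (1 + s))]

theorem rpow_mul_one_add_div_le_add_one_rpow {t p : ℝ} (ht : 0 < t) (hp : p ≤ 0) :
    t ^ p * (1 + p / t) ≤ (t + 1) ^ p := by
  have hbern := one_add_mul_self_le_rpow_one_add_of_nonpos
    (neg_one_lt_zero.trans (inv_pos.2 ht)) hp
  calc t ^ p * (1 + p / t) ≤ t ^ p * (1 + t⁻¹) ^ p :=
        mul_le_mul_of_nonneg_left (by rwa [div_eq_mul_inv]) (rpow_nonneg ht.le p)
    _ = (t + 1) ^ p := by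
        rw [← mul_rpow ht.le (by positivity), mul_add, mul_inv_cancel₀ ht.ne', mul_one]

theorem eventually_mul_inv_le_mul_rpow_neg {d : ℝ} (hd : d < 1) (e : ℝ) {c : ℝ} (hc : 0 < c) :
    ∀ᶠ t : ℝ in atTop, e * t⁻¹ ≤ c * t ^ (-d) := by
  have hlim : Tendsto (fun t : ℝ => e * t ^ (-(1 - d))) atTop (nhds 0) := by
    simpa using (tendsto_rpow_neg_atTop (sub_pos.2 hd)).const_mul e
  filter_upwards [hlim.eventually (ge_mem_nhds hc), eventually_gt_atTop 0] with t hsmall ht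
  calc e * t⁻¹ = e * t ^ (-(1 - d)) * t ^ (-d) := by
        rw [mul_assoc, ← rpow_add ht, show -(1 - d) + -d = -1 by ring, rpow_neg_one]
    _ ≤ c * t ^ (-d) := mul_le_mul_of_nonneg_right hsmall (rpow_nonneg ht.le _)

theorem one_sub_mul_add_mul_rpow_le {κ C K d e t A : ℝ} (ht : 0 < t) (he : 0 ≤ e) (hK : 0 ≤ K)
    (hCK : 2 * C ≤ κ * K) (hκt : κ * t ^ (-d) ≤ 1) (hloss : e * t⁻¹ ≤ κ / 2 * t ^ (-d))
    (hA : A ≤ K * t ^ (-e)) :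
    (1 - κ * t ^ (-d)) * A + C * t ^ (-(e + d)) ≤ K * (t + 1) ^ (-e) := by
  set x := t ^ (-d)
  set y := t ^ (-e)
  have hx : 0 ≤ x := rpow_nonneg ht.le _
  have hy : 0 ≤ y := rpow_nonneg ht.le _
  have hforcing : t ^ (-(e + d)) = y * x := by rw [neg_add, rpow_add ht]
  have hdecay : y * (1 - e * t⁻¹) ≤ (t + 1) ^ (-e) := by
    simpa [div_eq_mul_inv, sub_eq_add_neg] using rpow_mul_one_add_div_le_add_one_rpow ht
      (neg_nonpos.2 he)
  calc (1 - κ * x) * A + C * t ^ (-(e + d)) ≤ (1 - κ * x) * (K * y) + C * (y * x) := by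
        rw [hforcing]
        exact add_le_add_left (mul_le_mul_of_nonneg_left hA (by linarith)) _
    _ ≤ K * (y * (1 - e * t⁻¹)) := by
        nlinarith [mul_le_mul_of_nonneg_left hloss (mul_nonneg hK hy),
          mul_le_mul_of_nonneg_right hCK (mul_nonneg hy hx)]
    _ ≤ K * (t + 1) ^ (-e) := mul_le_mul_of_nonneg_left hdecay hK

theorem exists_forall_le_mul_of_step {a b : ℕ → ℝ} {m N : ℕ} {K₀ : ℝ} (hb : ∀ t ≥ m, 0 < b t)
    (hstep : ∀ K ≥ K₀, ∀ t ≥ N, a t ≤ K * b t → a (t + 1) ≤ K * b (t + 1)) :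
    ∃ K, ∀ t ≥ m, a t ≤ K * b t := by
  obtain ⟨M, hM⟩ := ((Set.finite_Iic (max m N)).image fun t => a t / b t).bddAbove
  have hinit : ∀ t ≥ m, t ≤ max m N → a t ≤ max K₀ M * b t := fun t ht htN => by
    have : a t / b t ≤ M := hM ⟨t, htN, rfl⟩
    rw [div_le_iff₀ (hb t ht)] at this
    exact this.trans (mul_le_mul_of_nonneg_right (le_max_right _ _) (hb t ht).le)
  refine ⟨max K₀ M, fun t ht => ?_⟩
  induction t, ht using Nat.le_induction with
  | base => exact hinit m le_rfl (le_max_left m N)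
  | succ t ht ih =>
    by_cases htN : t + 1 ≤ max m N
    · exact hinit (t + 1) (by omega) htN
    · exact hstep _ (le_max_left _ _) t (by omega) ih

theorem stmt_3_general (a : ℕ → ℝ) (κ C q d : ℝ) (hκ0 : 0 < κ) (hκ1 : κ < 1)
    (hq : 2 ≤ q) (hd1 : 1 / 2 < d) (hd2 : d < 1)
    (hrec : ∀ t : ℕ, 1 ≤ t →
      a (t + 1) ≤ (1 - κ * (t : ℝ) ^ (-d)) * a t + C * (t : ℝ) ^ (-(q * d))) :
    ∃ K : ℝ, ∀ t : ℕ, 1 ≤ t → a t ≤ K * (t : ℝ) ^ (-((q - 1) * d)) := by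
  have he : 0 ≤ (q - 1) * d := mul_nonneg (by linarith) (by linarith)
  obtain ⟨N, hN⟩ := eventually_atTop.1 <| tendsto_natCast_atTop_atTop.eventually <|
    eventually_mul_inv_le_mul_rpow_neg hd2 ((q - 1) * d) (half_pos hκ0)
  refine exists_forall_le_mul_of_step (N := max N 1) (K₀ := max 0 (2 * C / κ))
    (fun t ht => rpow_pos_of_pos (by exact_mod_cast ht) _) fun K hK t ht ih => ?_
  have ht1 : 1 ≤ t := (le_max_right N 1).trans ht
  have hκt : κ * (t : ℝ) ^ (-d) ≤ 1 := by
    have : (t : ℝ) ^ (-d) ≤ 1 :=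
      rpow_le_one_of_one_le_of_nonpos (by exact_mod_cast ht1) (by linarith)
    nlinarith
  have hCK : 2 * C ≤ κ * K := by
    have := (div_le_iff₀ hκ0).1 ((le_max_right _ _).trans hK)
    linarith
  have hstep := one_sub_mul_add_mul_rpow_le (by positivity) he ((le_max_left _ _).trans hK)
    hCK hκt (hN t ((le_max_left N 1).trans ht)) ih
  rw [show (q - 1) * d + d = q * d by ring] at hstep
  push_cast
  exact (hrec t ht1).trans hstep

/-- Bound on a geometric-like sequence: if
`a_{t+1} ≤ (1 − κ t^{-d}) a_t + C t^{-pd}` for all `t ≥ 1`, with `0 < κ < 1`,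
`C ≥ 0`, `p ≥ 2`, `d ∈ (1/2, 1)`, then `a_t ≤ K · t^{-(p-1)d}` for some constant `K`. -/
theorem stmt_3 (a : ℕ → ℝ) (κ C q d : ℝ) (hκ0 : 0 < κ) (hκ1 : κ < 1) (hC : 0 ≤ C)
    (hq : 2 ≤ q) (hd1 : 1 / 2 < d) (hd2 : d < 1)
    (hnonneg : ∀ t : ℕ, 1 ≤ t → 0 ≤ a t)
    (hrec : ∀ t : ℕ, 1 ≤ t →
      a (t + 1) ≤ (1 - κ * (t : ℝ) ^ (-d)) * a t + C * (t : ℝ) ^ (-(q * d))) :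
    ∃ K : ℝ, ∀ t : ℕ, 1 ≤ t → a t ≤ K * (t : ℝ) ^ (-((q - 1) * d)) :=
  stmt_3_general a κ C q d hκ0 hκ1 hq hd1 hd2 hrec
end

section
/- Let θ*, Δ ∈ ℝ^p with θ* supported on S ⊆ {1,…,p}, and let λ > 0. If −(1/2)λ‖Δ‖₁ ≤ λ(‖θ*‖₁ − ‖θ* + Δ‖₁), then ‖Δ_{S^c}‖₁ ≤ 3‖Δ_S‖₁. -/
open Finset

section DecomposableNorm

variable {ι E : Type*} [Fintype ι] [DecidableEq ι] [SeminormedAddCommGroup E]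

theorem sum_norm_sub_sum_norm_add_le_of_support_subset {θ Δ : ι → E} {S : Finset ι}
    (hθ : ∀ j ∉ S, θ j = 0) :
    ∑ j, ‖θ j‖ - ∑ j, ‖θ j + Δ j‖ ≤ ∑ j ∈ S, ‖Δ j‖ - ∑ j ∈ Sᶜ, ‖Δ j‖ := by
  have off_support_θ : ∑ j ∈ Sᶜ, ‖θ j‖ = 0 :=
    sum_eq_zero fun j hj => by rw [hθ j (mem_compl.mp hj), norm_zero]
  have off_support_sum : ∑ j ∈ Sᶜ, ‖θ j + Δ j‖ = ∑ j ∈ Sᶜ, ‖Δ j‖ :=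
    sum_congr rfl fun j hj => by rw [hθ j (mem_compl.mp hj), zero_add]
  have on_support : ∑ j ∈ S, ‖θ j‖ - ∑ j ∈ S, ‖θ j + Δ j‖ ≤ ∑ j ∈ S, ‖Δ j‖ := by
    rw [← sum_sub_distrib]
    refine sum_le_sum fun j _ => ?_
    simpa using norm_sub_norm_le (θ j) (θ j + Δ j)
  rw [← sum_add_sum_compl S fun j => ‖θ j‖, ← sum_add_sum_compl S fun j => ‖θ j + Δ j‖]
  linarith

end DecomposableNorm

/-- LASSO cone condition: if `θ` is supported on `S`, `λ > 0` and
`−(1/2)λ‖Δ‖₁ ≤ λ(‖θ‖₁ − ‖θ + Δ‖₁)`, then `‖Δ_{Sᶜ}‖₁ ≤ 3‖Δ_S‖₁`. -/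
theorem stmt_11 {p : ℕ} (θ Δ : Fin p → ℝ) (S : Finset (Fin p)) (lam : ℝ)
    (hsupp : ∀ j ∉ S, θ j = 0) (hlam : 0 < lam)
    (hineq : -(1 / 2) * lam * ∑ j, |Δ j| ≤
      lam * ((∑ j, |θ j|) - ∑ j, |θ j + Δ j|)) :
    ∑ j ∈ Sᶜ, |Δ j| ≤ 3 * ∑ j ∈ S, |Δ j| := by
  simp only [← Real.norm_eq_abs] at hineq ⊢
  have basic : -(1 / 2) * ∑ j, ‖Δ j‖ ≤ ∑ j, ‖θ j‖ - ∑ j, ‖θ j + Δ j‖ :=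
    le_of_mul_le_mul_left (by linarith) hlam
  have decomposed := sum_norm_sub_sum_norm_add_le_of_support_subset (Δ := Δ) hsupp
  rw [← sum_add_sum_compl S fun j => ‖Δ j‖] at basic
  linarith
end
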